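/- arXiv:1703.08302 — 2 statements merged into one kernel-verified Lean document; each statement's English description precedes it below -/
import Mathlib

section
/- Let P be a d×n matrix with entries P_{ij} ∈ (ℤ/2ℤ)², and let (ℤ/2ℤ)^d act on Tⁿ by letting v ∈ (ℤ/2ℤ)^d act as the diagonal map φ_{s(v)} where s(v)(j) = Σ_{i=1}^d v_i · P_{ij}. Then this action is free if and only if for every nonzero v ∈ (ℤ/2ℤ)^d there exists a column j with Σ_{i=1}^d v_i · P_{ij} = (1,1); equivalently, the sum of any nonempty collection of distinct rows of P contains an entry equal to the code (1,1) of g₁. -/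
/-- For `(a,b) ∈ (ℤ/2ℤ)²`, the map `φ(a,b) : ℝ/ℤ → ℝ/ℤ`, `[t] ↦ [(-1)^{a+b} t + b/2]`
(lifting `a, b` to `{0,1}`).  Under this coding `g₀ = φ(0,0)`, `g₁ = φ(1,1)`,
`g₂ = φ(1,0)`, `g₃ = φ(0,1)`. -/
noncomputable def phi (p : ZMod 2 × ZMod 2) (z : AddCircle (1 : ℝ)) : AddCircle (1 : ℝ) :=
  ((-1 : ℤ) ^ (p.1.val + p.2.val)) • z + (((p.2.val : ℝ) / 2 : ℝ) : AddCircle (1 : ℝ))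

lemma zmod2_cases (a : ZMod 2) : a = 0 ∨ a = 1 := by revert a; decide

lemma half_ne_zero : (((1:ℝ)/2 : ℝ) : AddCircle (1:ℝ)) ≠ 0 := by
  intro h
  rw [AddCircle.coe_eq_zero_iff] at h
  obtain ⟨m, hm⟩ := h
  have hm' : (m : ℝ) = 1/2 := by simpa using hm
  rcases lt_trichotomy m 0 with h | h | h
  · have : (m:ℝ) < 0 := by exact_mod_cast h
    linarith
  · subst h; norm_num at hm'
  · have : (1:ℝ) ≤ m := by exact_mod_cast h
    linarith

lemma phi_fixed (p : ZMod 2 × ZMod 2) (hp : p ≠ (1, 1)) : ∃ z, phi p z = z := by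
  obtain ⟨a, b⟩ := p
  rcases zmod2_cases a with ha | ha <;> rcases zmod2_cases b with hb | hb <;>
    subst ha <;> subst hb
  · refine ⟨0, ?_⟩
    show ((-1:ℤ) ^ ((0:ZMod 2).val + (0:ZMod 2).val)) • (0 : AddCircle (1:ℝ))
        + ((((0:ZMod 2).val : ℝ) / 2 : ℝ) : AddCircle (1:ℝ)) = 0
    rw [show ((0:ZMod 2).val) = 0 from rfl]
    simp
  · -- (0,1): z ↦ -z + 1/2, fixed point 1/4
    refine ⟨((1/4 : ℝ) : AddCircle (1:ℝ)), ?_⟩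
    show ((-1:ℤ) ^ ((0:ZMod 2).val + (1:ZMod 2).val)) • _
        + ((((1:ZMod 2).val : ℝ) / 2 : ℝ) : AddCircle (1:ℝ)) = _
    rw [show ((0:ZMod 2).val) = 0 from rfl, show ((1:ZMod 2).val) = 1 from rfl]
    rw [Nat.cast_one, zero_add, pow_one, neg_one_zsmul, ← AddCircle.coe_neg,
      ← AddCircle.coe_add]
    norm_num
  · refine ⟨0, ?_⟩
    show ((-1:ℤ) ^ ((1:ZMod 2).val + (0:ZMod 2).val)) • (0 : AddCircle (1:ℝ))
        + ((((0:ZMod 2).val : ℝ) / 2 : ℝ) : AddCircle (1:ℝ)) = 0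
    rw [show ((0:ZMod 2).val) = 0 from rfl]
    simp
  · exact absurd rfl hp

lemma phi_one_one (z : AddCircle (1:ℝ)) : phi (1, 1) z ≠ z := by
  intro h
  have h' : z + (((1:ℝ)/2 : ℝ) : AddCircle (1:ℝ)) = z + 0 := by
    rw [add_zero]
    calc z + (((1:ℝ)/2 : ℝ) : AddCircle (1:ℝ))
        = ((-1:ℤ) ^ ((1:ZMod 2).val + (1:ZMod 2).val)) • z
            + ((((1:ZMod 2).val : ℝ) / 2 : ℝ) : AddCircle (1:ℝ)) := by
          rw [show ((1:ZMod 2).val) = 1 from rfl]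
          norm_num
      _ = z := h
  exact half_ne_zero (add_left_cancel h')

/-- Let `P` be a `d×n` matrix with entries `P_{ij} ∈ (ℤ/2ℤ)²`, and let `(ℤ/2ℤ)^d` act on
`Tⁿ` by letting `v ∈ (ℤ/2ℤ)^d` act as the diagonal map `φ_{s(v)}` where
`s(v)(j) = Σ_{i=1}^d v_i • P_{ij}`.  Then this action is free (i.e. `v • t = t` forces
`v = 0`) if and only if for every nonzero `v ∈ (ℤ/2ℤ)^d` there exists a column `j` with
`Σ_{i=1}^d v_i • P_{ij} = (1,1)`: the sum of any nonempty collection of distinct rows of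
`P` contains an entry equal to the code `(1,1)` of `g₁`. -/
theorem stmt3 (d n : ℕ) (P : Fin d → Fin n → ZMod 2 × ZMod 2) :
    (∀ (v : Fin d → ZMod 2) (t : Fin n → AddCircle (1 : ℝ)),
        (fun j => phi (∑ i : Fin d, v i • P i j) (t j)) = t → v = 0) ↔
      ∀ v : Fin d → ZMod 2, v ≠ 0 → ∃ j : Fin n, ∑ i : Fin d, v i • P i j = (1, 1) := by
  constructor
  · intro h v hv
    by_contra hj
    push_neg at hj
    choose t ht using fun j => phi_fixed _ (hj j)
    exact hv (h v t (funext ht))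
  · intro h v t ht
    by_contra hv
    obtain ⟨j, hj⟩ := h v hv
    have hcf := congrFun ht j
    rw [hj] at hcf
    exact phi_one_one _ hcf
end

section
/- Let A = [a_{ij}] be a Bott matrix of size 2n admitting a Kähler pairing {j₁,j_{n+1}}, …, {j_n,j_{2n}}, and for each row i let S_i = a_{i j₁} + a_{i j₂} + … + a_{i j_n} ∈ ℤ. If for every i ∈ {1,…,2n} either S_i is even, or S_i is odd and the i-th column of A is zero, then Σ_{i=1}^{2n} (S_i mod 2) x_i² ∈ Id_{P_A}; i.e. w₂ vanishes in the characteristic algebra 𝔽₂[x₁,…,x_{2n}]/Id_{P_A} and the real Bott manifold M(A) has a Spin structure. -/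
open MvPolynomial

/-- `α_j = x_j + Σ_{i<j} a_{ij} x_i ∈ 𝔽₂[x₁,…,x_{2n}]` for a Bott matrix `A` (entries read
in `𝔽₂`); the corresponding `β_j` is just `x_j`. -/
noncomputable def alphaP {N : ℕ} (A : Fin N → Fin N → ℕ) (j : Fin N) :
    MvPolynomial (Fin N) (ZMod 2) :=
  X j + ∑ i ∈ Finset.univ.filter (fun i : Fin N => i < j), C ((A i j : ZMod 2)) * X i

/-- `θ_j = α_j β_j  (β_j = x_j)`. -/
noncomputable def thetaP {N : ℕ} (A : Fin N → Fin N → ℕ) (j : Fin N) :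
    MvPolynomial (Fin N) (ZMod 2) :=
  alphaP A j * X j

/-- The characteristic ideal `Id_{P_A} = (θ₁,…,θ_{2n})`. -/
noncomputable def IdPA {N : ℕ} (A : Fin N → Fin N → ℕ) :
    Ideal (MvPolynomial (Fin N) (ZMod 2)) :=
  Ideal.span (Set.range (thetaP A))

/-- Let `A = [a_{ij}]` be a Bott matrix of size `2n` (strictly upper triangular, entries
in `{0,1}`) admitting a Kähler pairing, coded by a bijection `σ : Fin n ⊕ Fin n ≃ Fin (2n)`
with equal paired columns, and for each row `i` let
`S_i = a_{i j₁} + a_{i j₂} + … + a_{i j_n} ∈ ℤ`.  If for every `i ∈ {1,…,2n}` either `S_i`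
is even, or `S_i` is odd and the `i`-th column of `A` is zero, then
`Σ_{i=1}^{2n} (S_i mod 2) x_i² ∈ Id_{P_A}`; i.e. `w₂` vanishes in the characteristic
algebra `𝔽₂[x₁,…,x_{2n}]/Id_{P_A}` and the real Bott manifold `M(A)` has a Spin
structure. -/
theorem stmt15 (n : ℕ) (A : Fin (2 * n) → Fin (2 * n) → ℕ)
    (hA01 : ∀ i j, A i j ≤ 1) (hAupper : ∀ i j : Fin (2 * n), j ≤ i → A i j = 0)
    (σ : (Fin n ⊕ Fin n) ≃ Fin (2 * n))
    (hK : ∀ (k : Fin n) (i : Fin (2 * n)), A i (σ (Sum.inl k)) = A i (σ (Sum.inr k)))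
    (S : Fin (2 * n) → ℤ)
    (hS : ∀ i, S i = ∑ k : Fin n, (A i (σ (Sum.inl k)) : ℤ))
    (h : ∀ i : Fin (2 * n), Even (S i) ∨ (Odd (S i) ∧ ∀ l, A l i = 0)) :
    (∑ i : Fin (2 * n), C ((S i : ZMod 2)) * X i ^ 2) ∈ IdPA A := by
  apply Ideal.sum_mem
  intro i _
  rcases h i with he | ⟨ho, hcol⟩
  · have h0 : ((S i : ZMod 2)) = 0 := by
      rw [ZMod.intCast_zmod_eq_zero_iff_dvd]
      exact_mod_cast he.two_dvd
    simp [h0]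
  · have h1 : ((S i : ZMod 2)) = 1 := by
      obtain ⟨k, hk⟩ := ho
      rw [hk]
      push_cast
      have : (2 : ZMod 2) = 0 := by decide
      rw [this]
      ring
    rw [h1, map_one, one_mul]
    have htheta : thetaP A i = X i ^ 2 := by
      unfold thetaP alphaP
      simp [hcol]
      ring
    rw [← htheta]
    exact Ideal.subset_span ⟨i, rfl⟩
end
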